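/- arXiv:2108.04168 — 2 statements merged into one kernel-verified Lean document; each statement's English description precedes it below -/
import Mathlib

section
/- Let (A,B,C) be a generic triple of flags in an m-dimensional R-vector space V over a skew field R, and let a,b,c ≥ 1 be integers with a+b+c = m+2. Then L := A^{a-1} ∩ B^{b-1} ∩ C^{c-1} is an R-line, and each of the three maps L → gr^a A, L → gr^b B, L → gr^c C, given by the inclusion of L into A^{a-1} (respectively B^{b-1}, C^{c-1}) followed by the quotient projection, is an isomorphism of left R-modules. Consequently, the three induced isomorphisms gr^a A → gr^b B, gr^b B → gr^c C, gr^c C → gr^a A (each obtained by composing the inverse of one of these projections with another) compose to the identity of gr^a A. -/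
/-- A flag in an `m`-dimensional `R`-vector space `V`: a chain
`V = A^0 ⊃ A^1 ⊃ ... ⊃ A^m = 0` of submodules in which `A^i` has codimension `i`. -/
structure IsFlag {R V : Type*} [DivisionRing R] [AddCommGroup V] [Module R V]
    (m : ℕ) (A : ℕ → Submodule R V) : Prop where
  top : A 0 = ⊤
  bot : A m = ⊥
  antitone : ∀ ⦃i j : ℕ⦄, i ≤ j → j ≤ m → A j ≤ A i
  codim : ∀ i ≤ m, Module.finrank R (V ⧸ A i) = i

/-- A triple of flags `(A, B, C)` is generic if for all `a, b, c ≥ 0` with `a + b + c = m`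
the natural map `V → V/A^a ⊕ V/B^b ⊕ V/C^c` is an isomorphism. -/
def IsGenericTriple {R V : Type*} [DivisionRing R] [AddCommGroup V] [Module R V]
    (m : ℕ) (A B C : ℕ → Submodule R V) : Prop :=
  ∀ a b c : ℕ, a + b + c = m →
    Function.Bijective
      ⇑(LinearMap.prod (A a).mkQ (LinearMap.prod (B b).mkQ (C c).mkQ))

/-!
The line `L = A^{a-1} ∩ B^{b-1} ∩ C^{c-1}` has dimension at least
`3(m + 1) - (a + b + c) - 2m = 1` by counting codimensions. Genericity for the index triple
`(a, b - 1, c - 1)` gives `L ∩ A^a = 0`, so `L` injects into the one-dimensional `gr^a A`, and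
likewise for `B` and `C`; hence `L` is a line and all three projections are isomorphisms.
-/

open Module

namespace Submodule

variable {R V : Type*}

theorem finrank_add_finrank_le_finrank_inf_add [DivisionRing R] [AddCommGroup V] [Module R V]
    [Module.Finite R V] (s t : Submodule R V) :
    finrank R s + finrank R t ≤ finrank R ↥(s ⊓ t) + finrank R V := by
  rw [← finrank_sup_add_finrank_inf_eq, add_comm]
  exact Nat.add_le_add_left (finrank_le _) _

theorem injective_mkQ_comp_inclusion [Ring R] [AddCommGroup V] [Module R V]
    {L P Q : Submodule R V} (hLP : L ≤ P) (hLQ : Disjoint L Q) :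
    Function.Injective ((Q.comap P.subtype).mkQ ∘ₗ inclusion hLP) := by
  rw [injective_iff_map_eq_zero]
  intro x hx
  have hxQ : (x : V) ∈ Q := by simpa [Quotient.mk_eq_zero] using hx
  exact Subtype.ext ((disjoint_def.1 hLQ) x x.2 hxQ)

end Submodule

section

variable {R V : Type*} [DivisionRing R] [AddCommGroup V] [Module R V] {m : ℕ}

namespace IsFlag

variable {A : ℕ → Submodule R V}

theorem finrank_eq (hA : IsFlag m A) : finrank R V = m := by
  have h := hA.codim m le_rfl
  rwa [hA.bot, (Submodule.quotEquivOfEqBot ⊥ rfl).finrank_eq] at h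

theorem finite (hA : IsFlag m A) : Module.Finite R V := by
  rcases Nat.eq_zero_or_pos m with rfl | hm
  · exact ⟨⟨∅, by rw [Finset.coe_empty, Submodule.span_empty, ← hA.bot, hA.top]⟩⟩
  · exact Module.finite_of_finrank_pos (hA.finrank_eq ▸ hm)

theorem finrank_apply (hA : IsFlag m A) {i : ℕ} (hi : i ≤ m) : finrank R (A i) = m - i := by
  have := hA.finite
  have h := Submodule.finrank_quotient_add_finrank (A i)
  rw [hA.codim i hi, hA.finrank_eq] at h
  omega

theorem finrank_gr (hA : IsFlag m A) {i : ℕ} (h1 : 1 ≤ i) (h2 : i ≤ m) :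
    finrank R (↥(A (i - 1)) ⧸ Submodule.comap (A (i - 1)).subtype (A i)) = 1 := by
  have := hA.finite
  have h := Submodule.finrank_quotient_add_finrank (Submodule.comap (A (i - 1)).subtype (A i))
  rw [(Submodule.comapSubtypeEquivOfLe (hA.antitone (Nat.sub_le i 1) h2)).finrank_eq,
    hA.finrank_apply h2, hA.finrank_apply (by omega)] at h
  omega

theorem sub_le_finrank_inf_inf {B C : ℕ → Submodule R V} (hA : IsFlag m A) (hB : IsFlag m B)
    (hC : IsFlag m C) {i j k : ℕ} (hi : i ≤ m) (hj : j ≤ m) (hk : k ≤ m) :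
    m - (i + j + k) ≤ finrank R ↥(A i ⊓ B j ⊓ C k) := by
  have := hA.finite
  have hAB := Submodule.finrank_add_finrank_le_finrank_inf_add (A i) (B j)
  have hABC := Submodule.finrank_add_finrank_le_finrank_inf_add (A i ⊓ B j) (C k)
  rw [hA.finrank_apply hi, hB.finrank_apply hj, hA.finrank_eq] at hAB
  rw [hC.finrank_apply hk, hA.finrank_eq] at hABC
  omega

end IsFlag

theorem IsGenericTriple.eq_zero_of_mem {A B C : ℕ → Submodule R V}
    (hgen : IsGenericTriple m A B C) {a b c : ℕ} (habc : a + b + c = m) {x : V}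
    (ha : x ∈ A a) (hb : x ∈ B b) (hc : x ∈ C c) : x = 0 :=
  (hgen a b c habc).injective (a₂ := 0) <| by
    simp [Prod.ext_iff, Submodule.Quotient.mk_eq_zero, ha, hb, hc]

end

/-- For a generic triple of flags and `a + b + c = m + 2` with `a, b, c ≥ 1`,
`L := A^{a-1} ⊓ B^{b-1} ⊓ C^{c-1}` is a line, the three maps (inclusion followed by
projection) `L → gr^a A`, `L → gr^b B`, `L → gr^c C` are isomorphisms, and the three
induced isomorphisms `gr^a A → gr^b B → gr^c C → gr^a A` compose to the identity. -/
theorem generic_triple_intersection_line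
    {R V : Type*} [DivisionRing R] [AddCommGroup V] [Module R V]
    {m : ℕ} {A B C : ℕ → Submodule R V}
    (hA : IsFlag m A) (hB : IsFlag m B) (hC : IsFlag m C)
    (hgen : IsGenericTriple m A B C)
    {a b c : ℕ} (ha : 1 ≤ a) (hb : 1 ≤ b) (hc : 1 ≤ c) (habc : a + b + c = m + 2) :
    Module.finrank R ↥(A (a - 1) ⊓ B (b - 1) ⊓ C (c - 1)) = 1 ∧
    ∃ (eA : ↥(A (a - 1) ⊓ B (b - 1) ⊓ C (c - 1)) ≃ₗ[R]
            (↥(A (a - 1)) ⧸ Submodule.comap (A (a - 1)).subtype (A a)))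
      (eB : ↥(A (a - 1) ⊓ B (b - 1) ⊓ C (c - 1)) ≃ₗ[R]
            (↥(B (b - 1)) ⧸ Submodule.comap (B (b - 1)).subtype (B b)))
      (eC : ↥(A (a - 1) ⊓ B (b - 1) ⊓ C (c - 1)) ≃ₗ[R]
            (↥(C (c - 1)) ⧸ Submodule.comap (C (c - 1)).subtype (C c))),
      eA.toLinearMap = (Submodule.comap (A (a - 1)).subtype (A a)).mkQ ∘ₗ
        Submodule.inclusion
          (show A (a - 1) ⊓ B (b - 1) ⊓ C (c - 1) ≤ A (a - 1) from
            le_trans inf_le_left inf_le_left) ∧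
      eB.toLinearMap = (Submodule.comap (B (b - 1)).subtype (B b)).mkQ ∘ₗ
        Submodule.inclusion
          (show A (a - 1) ⊓ B (b - 1) ⊓ C (c - 1) ≤ B (b - 1) from
            le_trans inf_le_left inf_le_right) ∧
      eC.toLinearMap = (Submodule.comap (C (c - 1)).subtype (C c)).mkQ ∘ₗ
        Submodule.inclusion
          (show A (a - 1) ⊓ B (b - 1) ⊓ C (c - 1) ≤ C (c - 1) from inf_le_right) ∧
      (eA.symm.trans eB).trans ((eB.symm.trans eC).trans (eC.symm.trans eA)) =
        LinearEquiv.refl R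
          (↥(A (a - 1)) ⧸ Submodule.comap (A (a - 1)).subtype (A a)) := by
  have := hA.finite
  set L := A (a - 1) ⊓ B (b - 1) ⊓ C (c - 1)
  have injA := Submodule.injective_mkQ_comp_inclusion (L := L) (Q := A a)
    (le_trans inf_le_left inf_le_left)
    (Submodule.disjoint_def.2 fun x hL hx ↦ hgen.eq_zero_of_mem (by omega) hx hL.1.2 hL.2)
  have injB := Submodule.injective_mkQ_comp_inclusion (L := L) (Q := B b)
    (le_trans inf_le_left inf_le_right)
    (Submodule.disjoint_def.2 fun x hL hx ↦ hgen.eq_zero_of_mem (by omega) hL.1.1 hx hL.2)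
  have injC := Submodule.injective_mkQ_comp_inclusion (L := L) (Q := C c) inf_le_right
    (Submodule.disjoint_def.2 fun x hL hx ↦ hgen.eq_zero_of_mem (by omega) hL.1.1 hL.1.2 hx)
  have grA := hA.finrank_gr ha (by omega)
  have hL : finrank R L = 1 := by
    have lower : m - (a - 1 + (b - 1) + (c - 1)) ≤ finrank R L :=
      hA.sub_le_finrank_inf_inf hB hC (by omega) (by omega) (by omega)
    have upper := (LinearMap.finrank_le_finrank_of_injective injA).trans_eq grA
    omega
  refine ⟨hL, LinearMap.linearEquivOfInjective _ injA (hL.trans grA.symm),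
    LinearMap.linearEquivOfInjective _ injB (hL.trans (hB.finrank_gr hb (by omega)).symm),
    LinearMap.linearEquivOfInjective _ injC (hL.trans (hC.finrank_gr hc (by omega)).symm),
    rfl, rfl, rfl, ?_⟩
  ext x
  simp only [LinearEquiv.trans_apply, LinearEquiv.symm_apply_apply,
    LinearEquiv.apply_symm_apply, LinearEquiv.refl_apply]
end

section
/- Let R be a skew field and t_{ba}, t_{cb}, t_{dc}, t_{ad} units of R, with M_a := -(t_{ad}t_{dc}t_{cb}t_{ba}), M_b := -(t_{ba}t_{ad}t_{dc}t_{cb}), M_c := -(t_{cb}t_{ba}t_{ad}t_{dc}), M_d := -(t_{dc}t_{cb}t_{ba}t_{ad}), and assume 1 + M_b is a unit. Let t'_{ba} := (1+M_b)t_{ba}, t'_{cb} := t_{cb}(1+M_b)^{-1}, t'_{dc} := (1+M_d)t_{dc}, t'_{ad} := t_{ad}(1+M_d)^{-1}, and let M'_v be defined from the primed transports as the M_v are from the unprimed ones. Then: (i) the move can equivalently be written as t_{cb} = (1+M'_c)·t'_{cb} and t_{ad} = (1+M'_a)·t'_{ad}; and (ii) the move is an involution: applying the two-by-two move to the primed data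 at the rotated square, i.e. setting t''_{cb} := (1+M'_c)t'_{cb}, t''_{dc} := t'_{dc}(1+M'_c)^{-1}, t''_{ad} := (1+M'_a)t'_{ad}, t''_{ba} := t'_{ba}(1+M'_a)^{-1}, one recovers t''_{ba} = t_{ba}, t''_{cb} = t_{cb}, t''_{dc} = t_{dc}, t''_{ad} = t_{ad}. -/
/-!
The gauge change at `b` and `d` leaves the products `t_cb t_ba` and `t_ad t_dc` unchanged, so
`M'_a = M_a` and `M'_c = M_c`. Consecutive monodromies are cyclic rotations of one loop, and
`(1 - x y) x = x (1 - y x)` carries the factor `1 + M_v` across a transport into the factor of the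
next vertex; this cancels each gauge factor. In a skew field `x y = 1` iff `y x = 1`, so all four
`1 + M_v` are nonzero once `1 + M_b` is.
-/

theorem one_sub_mul_mul_eq_mul_one_sub_mul {R : Type*} [Ring R] (x y : R) :
    (1 - x * y) * x = x * (1 - y * x) := by
  noncomm_ring

theorem one_sub_mul_ne_zero_comm {R : Type*} [DivisionRing R] {x y : R}
    (h : 1 - x * y ≠ 0) : 1 - y * x ≠ 0 := by
  rw [sub_ne_zero, ne_comm] at h ⊢
  exact fun hyx => h (mul_eq_one_comm.mp hyx)

theorem one_sub_mul_mul_mul_inv_one_sub_mul {R : Type*} [DivisionRing R] {x y : R}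
    (h : 1 - y * x ≠ 0) : (1 - x * y) * x * (1 - y * x)⁻¹ = x := by
  rw [one_sub_mul_mul_eq_mul_one_sub_mul, mul_inv_cancel_right₀ h]

section Rotate

variable {R : Type*} [DivisionRing R] {a b c d M N : R}

theorem one_add_ne_zero_of_rotate (hM : M = -(a * b * c * d)) (hN : N = -(d * a * b * c))
    (h : 1 + M ≠ 0) : 1 + N ≠ 0 := by
  have h' : 1 - a * b * c * d ≠ 0 := by rwa [hM, ← sub_eq_add_neg] at h
  simpa only [hN, sub_eq_add_neg, mul_assoc] using one_sub_mul_ne_zero_comm h'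

theorem one_add_mul_mul_inv_one_add_of_rotate (hM : M = -(a * b * c * d))
    (hN : N = -(d * a * b * c)) (h : 1 + M ≠ 0) : (1 + N) * d * (1 + M)⁻¹ = d := by
  have h' : 1 - a * b * c * d ≠ 0 := by rwa [hM, ← sub_eq_add_neg] at h
  simpa only [hM, hN, sub_eq_add_neg, mul_assoc] using
    one_sub_mul_mul_mul_inv_one_sub_mul (x := d) (y := a * b * c) h'

end Rotate

theorem two_by_two_move_is_involution_general
    {R : Type*} [DivisionRing R]
    (tba tcb tdc tad : R)
    (Ma Mb Mc Md : R)
    (hMa : Ma = -(tad * tdc * tcb * tba)) (hMb : Mb = -(tba * tad * tdc * tcb))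
    (hMc : Mc = -(tcb * tba * tad * tdc)) (hMd : Md = -(tdc * tcb * tba * tad))
    (hu : IsUnit (1 + Mb))
    (tba' tcb' tdc' tad' : R)
    (hba' : tba' = (1 + Mb) * tba) (hcb' : tcb' = tcb * (1 + Mb)⁻¹)
    (hdc' : tdc' = (1 + Md) * tdc) (had' : tad' = tad * (1 + Md)⁻¹)
    (Ma' Mc' : R)
    (hMa' : Ma' = -(tad' * tdc' * tcb' * tba'))
    (hMc' : Mc' = -(tcb' * tba' * tad' * tdc')) :
    (tcb = (1 + Mc') * tcb' ∧ tad = (1 + Ma') * tad') ∧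
    ((1 + Mc') * tcb' = tcb ∧ tdc' * (1 + Mc')⁻¹ = tdc ∧
      (1 + Ma') * tad' = tad ∧ tba' * (1 + Ma')⁻¹ = tba) := by
  have hb : 1 + Mb ≠ 0 := hu.ne_zero
  have hc : 1 + Mc ≠ 0 := one_add_ne_zero_of_rotate hMb hMc hb
  have hd : 1 + Md ≠ 0 := one_add_ne_zero_of_rotate hMc hMd hc
  have ha : 1 + Ma ≠ 0 := one_add_ne_zero_of_rotate hMd hMa hd
  have hcb_ba : tcb' * tba' = tcb * tba := by rw [hcb', hba', mul_assoc, inv_mul_cancel_left₀ hb]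
  have had_dc : tad' * tdc' = tad * tdc := by rw [had', hdc', mul_assoc, inv_mul_cancel_left₀ hd]
  have hMc_eq : Mc' = Mc := by
    rw [hMc', hMc, mul_assoc (tcb' * tba'), hcb_ba, had_dc, ← mul_assoc]
  have hMa_eq : Ma' = Ma := by
    rw [hMa', hMa, mul_assoc (tad' * tdc'), had_dc, hcb_ba, ← mul_assoc]
  have hc_cb : (1 + Mc') * tcb' = tcb := by
    rw [hMc_eq, hcb', ← mul_assoc, one_add_mul_mul_inv_one_add_of_rotate hMb hMc hb]
  have hc_dc : tdc' * (1 + Mc')⁻¹ = tdc := by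
    rw [hMc_eq, hdc', one_add_mul_mul_inv_one_add_of_rotate hMc hMd hc]
  have ha_ad : (1 + Ma') * tad' = tad := by
    rw [hMa_eq, had', ← mul_assoc, one_add_mul_mul_inv_one_add_of_rotate hMd hMa hd]
  have ha_ba : tba' * (1 + Ma')⁻¹ = tba := by
    rw [hMa_eq, hba', one_add_mul_mul_inv_one_add_of_rotate hMa hMb ha]
  exact ⟨⟨hc_cb.symm, ha_ad.symm⟩, hc_cb, hc_dc, ha_ad, ha_ba⟩

/-- The two-by-two move on the parallel transports of a flat `R`-line bundle on the
square graph: (i) it can equivalently be written as `t_cb = (1+M'_c)·t'_cb` and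
`t_ad = (1+M'_a)·t'_ad`; (ii) it is an involution: applying the move to the primed data
at the rotated square recovers the original transports. -/
theorem two_by_two_move_is_involution
    {R : Type*} [DivisionRing R]
    (tba tcb tdc tad : R)
    (h1 : IsUnit tba) (h2 : IsUnit tcb) (h3 : IsUnit tdc) (h4 : IsUnit tad)
    (Ma Mb Mc Md : R)
    (hMa : Ma = -(tad * tdc * tcb * tba)) (hMb : Mb = -(tba * tad * tdc * tcb))
    (hMc : Mc = -(tcb * tba * tad * tdc)) (hMd : Md = -(tdc * tcb * tba * tad))
    (hu : IsUnit (1 + Mb))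
    (tba' tcb' tdc' tad' : R)
    (hba' : tba' = (1 + Mb) * tba) (hcb' : tcb' = tcb * (1 + Mb)⁻¹)
    (hdc' : tdc' = (1 + Md) * tdc) (had' : tad' = tad * (1 + Md)⁻¹)
    (Ma' Mb' Mc' Md' : R)
    (hMa' : Ma' = -(tad' * tdc' * tcb' * tba')) (hMb' : Mb' = -(tba' * tad' * tdc' * tcb'))
    (hMc' : Mc' = -(tcb' * tba' * tad' * tdc')) (hMd' : Md' = -(tdc' * tcb' * tba' * tad')) :
    (tcb = (1 + Mc') * tcb' ∧ tad = (1 + Ma') * tad') ∧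
    ((1 + Mc') * tcb' = tcb ∧ tdc' * (1 + Mc')⁻¹ = tdc ∧
      (1 + Ma') * tad' = tad ∧ tba' * (1 + Ma')⁻¹ = tba) :=
  two_by_two_move_is_involution_general tba tcb tdc tad Ma Mb Mc Md hMa hMb hMc hMd hu tba' tcb'
    tdc' tad' hba' hcb' hdc' had' Ma' Mc' hMa' hMc'
end
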